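/- Let B be a countable atomless Boolean algebra (a nontrivial Boolean algebra in which for every a with 0 < a there exists b with 0 < b < a), regarded as a structure in the language L_BA having binary function symbols for join and meet, a unary function symbol for complement, and constant symbols for 0 and 1. Let R be a countable structure in the language L_graph having a single binary relation symbol E, such that E is irreflexive and symmetric and R has the graph extension property: for any two disjoint finite sets U, W of elements of R there exists an element v ∉ U ∪ W with E(v,u) for all u ∈ U and ¬E(v,w) for all w ∈ W (so R is the countable random graph). Then R is a semi-retract of B: there exist qftp-respecting injections g : R → B and f : B → R such that f ∘ g is an L_graph-embedding of R into R. -/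

import Mathlib

open FirstOrder FirstOrder.Language

/-- Two same-length tuples have the same quantifier-free type over ∅. -/
def SameQfType (L : FirstOrder.Language) (M : Type*) [L.Structure M] {n : ℕ}
    (x y : Fin n → M) : Prop :=
  ∀ φ : L.Formula (Fin n), φ.IsQF → (φ.Realize x ↔ φ.Realize y)

/-- A qftp-respecting injection between structures in possibly different languages. -/
def QftpRespecting (L L' : FirstOrder.Language) (M N : Type*) [L.Structure M] [L'.Structure N]
    (h : M → N) : Prop :=
  Function.Injective h ∧
    ∀ (n : ℕ) (x y : Fin n → M), SameQfType L M x y → SameQfType L' N (h ∘ x) (h ∘ y)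

/-- `(g, f)` is a semi-retraction between `M` and `N`: both maps are qftp-respecting
injections and `f ∘ g` is qftp-preserving (equivalently, an `L`-embedding of `M` into `M`). -/
def IsSemiRetraction (L L' : FirstOrder.Language) (M N : Type*)
    [L.Structure M] [L'.Structure N] (g : M → N) (f : N → M) : Prop :=
  QftpRespecting L L' M N g ∧ QftpRespecting L' L N M f ∧
    ∀ (n : ℕ) (x : Fin n → M), SameQfType L M x (f ∘ g ∘ x)

/-- `M` is locally finite: every finitely generated substructure is finite. -/
def StructLocallyFinite (L : FirstOrder.Language) (M : Type*) [L.Structure M] : Prop :=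
  ∀ S : L.Substructure M, S.FG → (S : Set M).Finite

/-- `M → (B)^A_{r,d}` for substructures. -/
def ArrowSub (L : FirstOrder.Language) (M : Type*) [L.Structure M]
    (A B : L.Substructure M) (r d : ℕ) : Prop :=
  ∀ c : L.Substructure M → Fin r, ∃ B' : L.Substructure M,
    Nonempty (B' ≃[L] B) ∧
      (c '' {A' : L.Substructure M | A' ≤ B' ∧ Nonempty (A' ≃[L] A)}).ncard ≤ d

/-- `M →ᵉ (B)^A_{r,d}` for embeddings. -/
def ArrowEmb (L : FirstOrder.Language) (M : Type*) [L.Structure M]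
    (A B : L.Substructure M) (r d : ℕ) : Prop :=
  ∀ c : (A ↪[L] M) → Fin r, ∃ h : B ↪[L] M,
    (c '' {j : A ↪[L] M | ∃ e : A ↪[L] B, j = h.comp e}).ncard ≤ d

/-- A structure is rigid if its only automorphism is the identity. -/
def IsRigidStructure (L : FirstOrder.Language) (M : Type*) [L.Structure M] : Prop :=
  ∀ σ : M ≃[L] M, ∀ x : M, σ x = x

/-- Function symbols of the language of Boolean algebras: constants `0`, `1`, unary
complementation, and binary join and meet. -/
inductive BAFunc : ℕ → Type
  | bot : BAFunc 0
  | top : BAFunc 0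
  | compl : BAFunc 1
  | sup : BAFunc 2
  | inf : BAFunc 2

/-- The first-order language of Boolean algebras. -/
def LBA : FirstOrder.Language :=
  ⟨BAFunc, fun _ => Empty⟩

/-- The natural `LBA`-structure on a Boolean algebra. -/
def baStructure (B : Type*) [BooleanAlgebra B] : LBA.Structure B where
  funMap {n} f x :=
    match f, x with
    | .bot, _ => ⊥
    | .top, _ => ⊤
    | .compl, x => (x 0)ᶜ
    | .sup, x => x 0 ⊔ x 1
    | .inf, x => x 0 ⊓ x 1
  RelMap {n} r _ := r.elim

/-!
A countable graph embeds into any graph with the extension property by the usual forth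
construction.

Conversely, in an atomless Boolean algebra one can choose images `s v` of the vertices of a
countable graph `H`, one at a time, so that non-adjacent vertices go to disjoint elements while
every cell `⋀ ±s v` whose positive part is a clique (disjoint from the negative part) is nonzero:
the new element splits each such cell formed over neighbours of the new vertex and misses all
other cells, which is where atomlessness is used. A term's value is the join of the cells on
which the term is true in the two-element algebra, so the quantifier-free type of a tuple in a
Boolean algebra is determined by which of its cells vanish. Hence `s` respects quantifier-free
types, and it embeds `H` into the graph on the algebra in which `p` and `q` are adjacent when
`p ⊓ q`, `p ⊓ qᶜ`, `pᶜ ⊓ q`, `pᶜ ⊓ qᶜ` are all nonzero. That graph is quantifier-free definable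
in the algebra, so embedding it into the random graph gives the second map.
-/

open Function

-- Also makes `Bool`, the two-element algebra, an `LBA`-structure.
attribute [local instance] baStructure

theorem exists_seq_forall_prefix {X : Type*} (P : ∀ n, (Fin n → X) → Prop)
    (h₀ : P 0 Fin.elim0) (step : ∀ n (s : Fin n → X), P n s → ∃ x, P (n + 1) (Fin.snoc s x)) :
    ∃ f : ℕ → X, ∀ n, P n fun i => f i := by
  have : Nonempty X := let ⟨x, _⟩ := step 0 _ h₀; ⟨x⟩
  choose! next hnext using step
  let pre : ∀ n, Fin n → X := fun n => Nat.rec Fin.elim0 (fun m s => Fin.snoc s (next m s)) n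
  have hpre : ∀ n, P n (pre n) := fun n => Nat.rec h₀ (fun m ih => hnext m _ ih) n
  refine ⟨fun n => pre (n + 1) (Fin.last n), fun n => ?_⟩
  suffices h : ∀ n, pre n = fun i : Fin n => pre (i + 1) (Fin.last i) from h n ▸ hpre n
  intro n
  induction n with
  | zero => exact funext fun i => i.elim0
  | succ n ih =>
    funext i
    refine Fin.lastCases rfl (fun j => ?_) i
    change Fin.snoc (α := fun _ => X) (pre n) _ j.castSucc = _
    rw [Fin.snoc_castSucc, ih]
    rfl

theorem SameQfType.realize_eq_iff {L : Language} {M : Type*} [L.Structure M] {n : ℕ}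
    {x y : Fin n → M} (h : SameQfType L M x y) (t₁ t₂ : L.Term (Fin n)) :
    t₁.realize x = t₂.realize x ↔ t₁.realize y = t₂.realize y := by
  simpa only [Formula.realize_equal] using
    h (t₁.equal t₂) (BoundedFormula.IsAtomic.equal _ _).isQF

theorem sameQfType_of_forall_isAtomic {L : Language} {M : Type*} [L.Structure M] {n : ℕ}
    {x y : Fin n → M}
    (h : ∀ φ : L.Formula (Fin n), φ.IsAtomic → (φ.Realize x ↔ φ.Realize y)) :
    SameQfType L M x y := by
  intro φ hφ
  induction hφ with
  | falsum => exact Iff.rfl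
  | of_isAtomic hA => exact h _ hA
  | imp _ _ ih₁ ih₂ => exact imp_congr ih₁ ih₂

namespace SimpleGraph

variable {V W : Type*}

theorem exists_eq_var_of_graph_term {n : ℕ} (t : Language.graph.Term (Fin n ⊕ Fin 0)) :
    ∃ i, t = Term.var (Sum.inl i) := by
  rcases t with (i | i) | ⟨f, _⟩
  · exact ⟨i, rfl⟩
  · exact i.elim0
  · exact isEmptyElim f

theorem sameQfType_iff {G : SimpleGraph V} {n : ℕ} {x y : Fin n → V} :
    @SameQfType Language.graph V G.structure n x y ↔
      (∀ i j, x i = x j ↔ y i = y j) ∧ ∀ i j, G.Adj (x i) (x j) ↔ G.Adj (y i) (y j) := by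
  let := G.structure
  refine ⟨fun h => ⟨fun i j => h.realize_eq_iff (.var i) (.var j), fun i j => ?_⟩,
    fun ⟨he, ha⟩ => sameQfType_of_forall_isAtomic fun φ hφ => ?_⟩
  · exact h (adj.formula₂ (.var i) (.var j)) (BoundedFormula.IsAtomic.rel _ _).isQF
  · rcases hφ with ⟨t₁, t₂⟩ | ⟨R, ts⟩
    · obtain ⟨i, rfl⟩ := exists_eq_var_of_graph_term t₁
      obtain ⟨j, rfl⟩ := exists_eq_var_of_graph_term t₂
      exact he i j
    · cases R
      obtain ⟨i, hi⟩ := exists_eq_var_of_graph_term (ts 0)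
      obtain ⟨j, hj⟩ := exists_eq_var_of_graph_term (ts 1)
      change G.Adj ((ts 0).realize _) ((ts 1).realize _) ↔
        G.Adj ((ts 0).realize _) ((ts 1).realize _)
      rw [hi, hj]
      exact ha i j

theorem Embedding.sameQfType_comp_iff {H : SimpleGraph W} {G : SimpleGraph V} (e : H ↪g G)
    {n : ℕ} {x y : Fin n → W} :
    @SameQfType Language.graph V G.structure n (e ∘ x) (e ∘ y) ↔
      @SameQfType Language.graph W H.structure n x y := by
  simp only [sameQfType_iff, Function.comp_apply, e.injective.eq_iff, e.map_adj_iff]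

def HasExtensionProperty (G : SimpleGraph V) : Prop :=
  ∀ U W : Finset V, Disjoint U W → ∃ v : V, v ∉ U ∧ v ∉ W ∧
    (∀ u ∈ U, G.Adj v u) ∧ ∀ w ∈ W, ¬G.Adj v w

theorem HasExtensionProperty.exists_snoc {G : SimpleGraph V} (hG : G.HasExtensionProperty)
    {n : ℕ} {H : SimpleGraph (Fin (n + 1))} (φ : H.comap Fin.castSuccEmb ↪g G) :
    ∃ v, ∃ ψ : H ↪g G, ⇑ψ = Fin.snoc φ v := by
  classical
  obtain ⟨v, hvU, hvW, hU, hW⟩ := hG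
    ((Finset.univ.filter fun i => H.Adj i.castSucc (Fin.last n)).image φ)
    ((Finset.univ.filter fun i => ¬H.Adj i.castSucc (Fin.last n)).image φ) (by
      simp only [Finset.disjoint_left, Finset.mem_image, Finset.mem_filter, Finset.mem_univ,
        true_and]
      rintro _ ⟨i, hi, rfl⟩ ⟨j, hj, hji⟩
      exact hj (φ.injective hji ▸ hi))
  have hv : ∀ i, G.Adj v (φ i) ↔ H.Adj i.castSucc (Fin.last n) := fun i =>
    ⟨fun h => by_contra fun hi => hW _ (Finset.mem_image_of_mem _ (by simpa using hi)) h,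
      fun hi => hU _ (Finset.mem_image_of_mem _ (by simpa using hi))⟩
  have hrange : v ∉ Set.range φ := by
    rintro ⟨i, rfl⟩
    by_cases hi : H.Adj i.castSucc (Fin.last n)
    · exact hvU (Finset.mem_image_of_mem _ (by simpa using hi))
    · exact hvW (Finset.mem_image_of_mem _ (by simpa using hi))
  refine ⟨v, ⟨⟨Fin.snoc φ v, Fin.snoc_injective_iff.2 ⟨φ.injective, hrange⟩⟩, ?_⟩, rfl⟩
  intro a b
  induction a using Fin.lastCases with
  | last => induction b using Fin.lastCases with
    | last => simp
    | cast j => simpa [H.adj_comm] using hv j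
  | cast i => induction b using Fin.lastCases with
    | last => simpa [G.adj_comm, H.adj_comm] using hv i
    | cast j => simpa using φ.map_adj_iff

theorem HasExtensionProperty.exists_embedding_nat {G : SimpleGraph V}
    (hG : G.HasExtensionProperty) (H : SimpleGraph ℕ) : Nonempty (H ↪g G) := by
  obtain ⟨f, hf⟩ := exists_seq_forall_prefix
    (fun n (φ : Fin n → V) => ∃ ψ : H.comap Fin.valEmbedding ↪g G, ⇑ψ = φ)
    ⟨⟨⟨Fin.elim0, fun i => i.elim0⟩, fun {i} => i.elim0⟩, rfl⟩
    (by rintro n _ ⟨φ, rfl⟩; exact hG.exists_snoc (H := H.comap Fin.valEmbedding) φ)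
  refine ⟨⟨⟨f, fun a b hab => ?_⟩, fun {a b} => ?_⟩⟩ <;>
    obtain ⟨ψ, hψ⟩ := hf (max a b + 1)
  · exact congrArg Fin.val <| ψ.injective (a₁ := ⟨a, by omega⟩) (a₂ := ⟨b, by omega⟩)
      (by simpa [hψ] using hab)
  · change G.Adj (f a) (f b) ↔ H.Adj a b
    simpa [hψ] using ψ.map_adj_iff (v := ⟨a, by omega⟩) (w := ⟨b, by omega⟩)

theorem HasExtensionProperty.exists_embedding [Countable W] {G : SimpleGraph V}
    (hG : G.HasExtensionProperty) (H : SimpleGraph W) : Nonempty (H ↪g G) := by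
  obtain ⟨ι, hι⟩ := Countable.exists_injective_nat W
  let ι' : W ↪ ℕ := ⟨ι, hι⟩
  obtain ⟨e⟩ := hG.exists_embedding_nat (H.map ι')
  exact ⟨e.comp (Embedding.map ι' H)⟩

end SimpleGraph

section Cells

variable {B : Type*} [BooleanAlgebra B] {α : Type*} [Fintype α]

def cell (s : α → B) (ε : α → Bool) : B :=
  Finset.univ.inf fun i => if ε i then s i else (s i)ᶜ

theorem cell_le (s : α → B) (ε : α → Bool) (i : α) :
    cell s ε ≤ if ε i then s i else (s i)ᶜ :=
  Finset.inf_le (Finset.mem_univ i)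

theorem le_cell_iff {b : B} {s : α → B} {ε : α → Bool} :
    b ≤ cell s ε ↔ ∀ i, b ≤ if ε i then s i else (s i)ᶜ := by
  simp [cell, Finset.le_inf_iff]

theorem pairwise_disjoint_cell (s : α → B) : Pairwise (Disjoint on cell s) := by
  intro ε ε' hne
  obtain ⟨i, hi⟩ := Function.ne_iff.1 hne
  refine Disjoint.mono (cell_le s ε i) (cell_le s ε' i) ?_
  cases h : ε i <;> cases h' : ε' i <;> simp_all [disjoint_compl_left, disjoint_compl_right]

theorem sup_cell [DecidableEq α] (s : α → B) : Finset.univ.sup (cell s) = ⊤ := by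
  have h := Finset.inf_sup (κ := fun _ => Bool) Finset.univ (fun _ => Finset.univ)
    fun i (b : Bool) => if b then s i else (s i)ᶜ
  simp only [Fintype.univ_bool, Finset.sup_insert, Finset.sup_singleton, if_true,
    Bool.false_eq_true, if_false, sup_compl_eq_top, Finset.inf_top] at h
  refine top_le_iff.1 (h ▸ Finset.sup_le fun g _ => ?_)
  refine Finset.le_sup_of_le (Finset.mem_univ fun i => g i (Finset.mem_univ i)) ?_
  rw [Finset.inf_attach (f := fun i => if g i (Finset.mem_univ i) then s i else (s i)ᶜ)]
  rfl

theorem cell_snoc {n : ℕ} (s : Fin n → B) (d : B) (ε : Fin (n + 1) → Bool) :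
    cell (Fin.snoc s d) ε =
      cell s (ε ∘ Fin.castSucc) ⊓ if ε (Fin.last n) then d else dᶜ := by
  simp [cell, Fin.univ_castSuccEmb, Finset.inf_map, inf_comm, Function.comp_def]

theorem cell_sumElim_of_isEmpty {β : Type*} [Fintype β] [IsEmpty β] (s : α → B) (z : β → B)
    (ε : α ⊕ β → Bool) : cell (Sum.elim s z) ε = cell s (ε ∘ Sum.inl) := by
  simp [cell, ← Finset.univ_disjSum_univ, Function.comp_def]

theorem cell_le_realize (s : α → B) (ε : α → Bool) (t : LBA.Term α) :
    cell s ε ≤ if t.realize ε then t.realize s else (t.realize s)ᶜ := by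
  induction t with
  | var i => exact cell_le s ε i
  | func f ts ih =>
    cases f with
    | bot =>
      change _ ≤ if (⊥ : Bool) then (⊥ : B) else (⊥ : B)ᶜ
      simp
    | top =>
      change _ ≤ if (⊤ : Bool) then (⊤ : B) else (⊤ : B)ᶜ
      simp
    | compl =>
      refine (ih 0).trans ?_
      change _ ≤ if !(ts 0).realize ε then ((ts 0).realize s)ᶜ else ((ts 0).realize s)ᶜᶜ
      cases (ts 0).realize ε <;> simp
    | sup =>
      refine (le_inf (ih 0) (ih 1)).trans ?_
      change _ ≤ if ((ts 0).realize ε || (ts 1).realize ε) then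
        (ts 0).realize s ⊔ (ts 1).realize s else ((ts 0).realize s ⊔ (ts 1).realize s)ᶜ
      cases (ts 0).realize ε <;> cases (ts 1).realize ε <;> simp
    | inf =>
      refine (le_inf (ih 0) (ih 1)).trans ?_
      change _ ≤ if ((ts 0).realize ε && (ts 1).realize ε) then
        (ts 0).realize s ⊓ (ts 1).realize s else ((ts 0).realize s ⊓ (ts 1).realize s)ᶜ
      cases (ts 0).realize ε <;> cases (ts 1).realize ε <;> simp

theorem realize_le_realize_of_cell (s : α → B) {t t' : LBA.Term α}
    (h : ∀ ε, t.realize ε = true → t'.realize ε = false → cell s ε = ⊥) :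
    t.realize s ≤ t'.realize s := by
  classical
  rw [← top_inf_eq (t.realize s), ← sup_cell s, Finset.sup_inf_distrib_right]
  refine Finset.sup_le fun ε _ => ?_
  have ht := cell_le_realize s ε t
  have ht' := cell_le_realize s ε t'
  cases hε : t.realize ε <;> cases hε' : t'.realize ε <;> simp only [hε, hε'] at ht ht'
  · exact (inf_le_inf_right _ ht).trans (by simp)
  · exact (inf_le_inf_right _ ht).trans (by simp)
  · simp [h ε hε hε']
  · exact inf_le_left.trans ht'

theorem realize_eq_realize_iff (s : α → B) (t t' : LBA.Term α) :
    t.realize s = t'.realize s ↔ ∀ ε, t.realize ε ≠ t'.realize ε → cell s ε = ⊥ := by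
  refine ⟨fun h ε hne => ?_, fun h => le_antisymm
    (realize_le_realize_of_cell s fun ε h₁ h₂ => h ε (by simp [h₁, h₂]))
    (realize_le_realize_of_cell s fun ε h₁ h₂ => h ε (by simp [h₁, h₂]))⟩
  have key : (if t.realize ε then t'.realize s else (t'.realize s)ᶜ) ⊓
      (if t'.realize ε then t'.realize s else (t'.realize s)ᶜ) = ⊥ := by
    revert hne
    cases t.realize ε <;> cases t'.realize ε <;> simp
  exact le_bot_iff.1 (key ▸ le_inf (h ▸ cell_le_realize s ε t) (cell_le_realize s ε t'))

theorem sameQfType_of_cell_eq_bot_iff {n : ℕ} {x y : Fin n → B}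
    (h : ∀ ε, cell x ε = ⊥ ↔ cell y ε = ⊥) : SameQfType LBA B x y := by
  refine sameQfType_of_forall_isAtomic fun φ hφ => ?_
  rcases hφ with ⟨t₁, t₂⟩ | ⟨R, _⟩
  · change t₁.realize (Sum.elim x default) = t₂.realize (Sum.elim x default) ↔
      t₁.realize (Sum.elim y default) = t₂.realize (Sum.elim y default)
    simp only [realize_eq_realize_iff, cell_sumElim_of_isEmpty, h]
  · exact R.elim

end Cells

section Independence

variable (B : Type*) [BooleanAlgebra B]

def independenceGraph : SimpleGraph B where
  Adj p q := p ⊓ q ≠ ⊥ ∧ p ⊓ qᶜ ≠ ⊥ ∧ pᶜ ⊓ q ≠ ⊥ ∧ pᶜ ⊓ qᶜ ≠ ⊥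
  symm := ⟨fun p q ⟨h₁, h₂, h₃, h₄⟩ =>
    ⟨by rwa [inf_comm], by rwa [inf_comm], by rwa [inf_comm], by rwa [inf_comm]⟩⟩
  loopless := ⟨fun p h => h.2.1 inf_compl_eq_bot⟩

variable {B}

theorem SameQfType.independenceGraph_adj_iff {n : ℕ} {x y : Fin n → B}
    (h : SameQfType LBA B x y) (i j : Fin n) :
    (independenceGraph B).Adj (x i) (x j) ↔ (independenceGraph B).Adj (y i) (y j) := by
  have hbot (t : LBA.Term (Fin n)) : t.realize x = ⊥ ↔ t.realize y = ⊥ :=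
    h.realize_eq_iff t (.func BAFunc.bot ![])
  have hinf (a b : Bool) : (if a then x i else (x i)ᶜ) ⊓ (if b then x j else (x j)ᶜ) = ⊥ ↔
      (if a then y i else (y i)ᶜ) ⊓ (if b then y j else (y j)ᶜ) = ⊥ := by
    let lit (c : Bool) (k : Fin n) : LBA.Term (Fin n) :=
      if c then .var k else .func BAFunc.compl ![.var k]
    have := hbot (.func BAFunc.inf ![lit a i, lit b j])
    cases a <;> cases b <;> exact this
  exact and_congr (not_congr (hinf true true)) <| and_congr (not_congr (hinf true false)) <|
    and_congr (not_congr (hinf false true)) (not_congr (hinf false false))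

theorem SameQfType.independenceGraph {n : ℕ} {x y : Fin n → B} (h : SameQfType LBA B x y) :
    @SameQfType Language.graph B (independenceGraph B).structure n x y :=
  SimpleGraph.sameQfType_iff.2
    ⟨fun i j => h.realize_eq_iff (.var i) (.var j), h.independenceGraph_adj_iff⟩

end Independence

theorem exists_le_sup_splitting {B : Type*} [BooleanAlgebra B]
    (hatomless : ∀ a : B, ⊥ < a → ∃ b : B, ⊥ < b ∧ b < a)
    {ι : Type*} (S : Finset ι) (c : ι → B) (hc : ∀ i ∈ S, c i ≠ ⊥)
    (hdisj : (S : Set ι).PairwiseDisjoint c) :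
    ∃ d ≤ S.sup c, ∀ i ∈ S, c i ⊓ d ≠ ⊥ ∧ c i ⊓ dᶜ ≠ ⊥ := by
  choose! b hb using fun i hi => hatomless (c i) (bot_lt_iff_ne_bot.2 (hc i hi))
  refine ⟨S.sup b, Finset.sup_mono_fun fun i hi => (hb i hi).2.le, fun i hi => ?_⟩
  have hcb : c i ⊓ S.sup b = b i := by
    refine le_antisymm ?_ (le_inf (hb i hi).2.le (Finset.le_sup hi))
    rw [Finset.sup_inf_distrib_left]
    refine Finset.sup_le fun j hj => ?_
    rcases eq_or_ne i j with rfl | hij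
    · exact inf_le_right
    · exact ((hdisj hi hj hij).mono_right (hb j hj).2.le).le_bot.trans bot_le
  refine ⟨hcb ▸ (hb i hi).1.ne', fun h => (hb i hi).2.ne ?_⟩
  rw [← hcb, inf_eq_left, ← disjoint_compl_right_iff, disjoint_iff, h]

namespace SimpleGraph

variable {B : Type*} [BooleanAlgebra B] {V W ι : Type*}

def IsCliquePattern (H : SimpleGraph V) (x : ι → V) (ε : ι → Bool) : Prop :=
  ∀ i j, ε i → (ε j = false → x i ≠ x j) ∧ (ε j → x i ≠ x j → H.Adj (x i) (x j))

theorem isCliquePattern_congr {H : SimpleGraph V} {H' : SimpleGraph W} {x : ι → V} {y : ι → W}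
    (he : ∀ i j, x i = x j ↔ y i = y j) (ha : ∀ i j, H.Adj (x i) (x j) ↔ H'.Adj (y i) (y j))
    (ε : ι → Bool) : H.IsCliquePattern x ε ↔ H'.IsCliquePattern y ε := by
  simp only [IsCliquePattern, ne_eq, he, ha]

structure IsCellRepresentation (H : SimpleGraph V) (s : V → B) : Prop where
  inf_eq_bot : ∀ ⦃a b⦄, a ≠ b → ¬H.Adj a b → s a ⊓ s b = ⊥
  cell_ne_bot : ∀ ⦃k⦄ (x : Fin k → V) (ε : Fin k → Bool), H.IsCliquePattern x ε →
    cell (s ∘ x) ε ≠ ⊥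

variable {H : SimpleGraph V} {s : V → B}

theorem IsCellRepresentation.of_cell_ne_bot [Fintype V]
    (h₁ : ∀ ⦃a b⦄, a ≠ b → ¬H.Adj a b → s a ⊓ s b = ⊥)
    (h₂ : ∀ ε : V → Bool, H.IsCliquePattern id ε → cell s ε ≠ ⊥) :
    H.IsCellRepresentation s := by
  classical
  refine ⟨h₁, fun k x ε hx => ?_⟩
  let η a : Bool := decide (∃ i, ε i ∧ x i = a)
  have hη i : η (x i) = ε i := by
    cases h : ε i
    · simpa [η] using fun j hj hji => (hx j i hj).1 h hji
    · simpa [η] using ⟨i, h, rfl⟩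
  refine ne_bot_of_le_ne_bot (h₂ η fun a b ha => ?_)
    (le_cell_iff.2 fun i => hη i ▸ cell_le s η (x i))
  obtain ⟨i, hi, rfl⟩ : ∃ i, ε i ∧ x i = a := by simpa [η] using ha
  refine ⟨fun hb hab => ?_, fun hb hab => ?_⟩
  · simp only [id] at hab
    subst hab
    simp [hη, hi] at hb
  obtain ⟨j, hj, rfl⟩ : ∃ j, ε j ∧ x j = b := by simpa [η] using hb
  exact (hx i j hi).2 hj hab

theorem IsCellRepresentation.comp {H' : SimpleGraph W} {s : W → B}
    (hs : H'.IsCellRepresentation s) (e : H ↪g H') : H.IsCellRepresentation (s ∘ e) :=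
  ⟨fun _ _ hab hn => hs.inf_eq_bot (e.injective.ne hab) (e.map_adj_iff.not.2 hn),
    fun _ x ε hx => hs.cell_ne_bot (e ∘ x) ε <|
      (isCliquePattern_congr (fun _ _ => e.injective.eq_iff.symm)
        (fun _ _ => e.map_adj_iff.symm) ε).1 hx⟩

theorem IsCellRepresentation.cell_ne_bot_iff (hs : H.IsCellRepresentation s) {k : ℕ}
    {x : Fin k → V} {ε : Fin k → Bool} : cell (s ∘ x) ε ≠ ⊥ ↔ H.IsCliquePattern x ε := by
  refine ⟨fun h i j hi => ⟨fun hj hij => h ?_, fun hj hij => not_not.1 fun hn => h ?_⟩,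
    hs.cell_ne_bot x ε⟩
  · refine le_bot_iff.1 ((le_inf (cell_le _ ε i) (cell_le _ ε j)).trans ?_)
    simp [hi, hj, hij]
  · refine le_bot_iff.1 ((le_inf (cell_le _ ε i) (cell_le _ ε j)).trans ?_)
    simp [hi, hj, hs.inf_eq_bot hij hn]

theorem IsCellRepresentation.inf_ne_bot (hs : H.IsCellRepresentation s) {a b : V}
    {ε₀ ε₁ : Bool} (h : H.IsCliquePattern ![a, b] ![ε₀, ε₁]) :
    (if ε₀ then s a else (s a)ᶜ) ⊓ (if ε₁ then s b else (s b)ᶜ) ≠ ⊥ :=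
  ne_bot_of_le_ne_bot (hs.cell_ne_bot _ _ h) (le_inf (cell_le _ _ 0) (cell_le _ _ 1))

theorem IsCellRepresentation.injective (hs : H.IsCellRepresentation s) : Injective s := by
  intro a b hab
  by_contra hne
  exact hs.inf_ne_bot (a := a) (b := b) (ε₀ := true) (ε₁ := false)
    (by simp [IsCliquePattern, Fin.forall_fin_two, hne]) (by simp [hab])

theorem IsCellRepresentation.independenceGraph_adj_iff (hs : H.IsCellRepresentation s) {a b : V} :
    (independenceGraph B).Adj (s a) (s b) ↔ H.Adj a b := by
  refine ⟨fun h => not_not.1 fun hn => h.1 (hs.inf_eq_bot ?_ hn), fun h => ?_⟩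
  · rintro rfl
    exact (independenceGraph B).loopless.irrefl _ h
  have hab := h.ne
  refine ⟨hs.inf_ne_bot (ε₀ := true) (ε₁ := true) ?_, hs.inf_ne_bot (ε₀ := true) (ε₁ := false) ?_,
    hs.inf_ne_bot (ε₀ := false) (ε₁ := true) ?_, hs.inf_ne_bot (ε₀ := false) (ε₁ := false) ?_⟩ <;>
    simp [IsCliquePattern, Fin.forall_fin_two, hab, hab.symm, h, h.symm]

theorem IsCellRepresentation.sameQfType_comp (hs : H.IsCellRepresentation s) {n : ℕ}
    {x y : Fin n → V} (h : @SameQfType Language.graph V H.structure n x y) :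
    SameQfType LBA B (s ∘ x) (s ∘ y) := by
  obtain ⟨he, ha⟩ := sameQfType_iff.1 h
  refine sameQfType_of_cell_eq_bot_iff fun ε => not_iff_not.1 ?_
  exact hs.cell_ne_bot_iff.trans ((isCliquePattern_congr he ha ε).trans hs.cell_ne_bot_iff.symm)

theorem IsCellRepresentation.exists_snoc (hatomless : ∀ a : B, ⊥ < a → ∃ b : B, ⊥ < b ∧ b < a)
    {n : ℕ} {H : SimpleGraph (Fin (n + 1))} {s : Fin n → B}
    (hs : (H.comap Fin.castSuccEmb).IsCellRepresentation s) :
    ∃ d, H.IsCellRepresentation (Fin.snoc s d) := by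
  classical
  -- `d` will split every cell over a clique of neighbours of the new vertex and miss the others.
  let ToSplit (ε : Fin n → Bool) : Prop :=
    (H.comap Fin.castSuccEmb).IsCliquePattern id ε ∧ ∀ i, ε i → H.Adj i.castSucc (Fin.last n)
  obtain ⟨d, hd, hsplit⟩ := exists_le_sup_splitting hatomless {ε | ToSplit ε} (cell s)
    (fun ε hε => hs.cell_ne_bot id ε (Finset.mem_filter.1 hε).2.1)
    ((pairwise_disjoint_cell s).set_pairwise _)
  have hbad ε (hε : ¬ToSplit ε) : Disjoint (cell s ε) d := by
    refine Disjoint.mono_right hd (Finset.disjoint_sup_right.2 fun ε' hε' => ?_)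
    exact pairwise_disjoint_cell s fun h => hε (h ▸ (Finset.mem_filter.1 hε').2)
  have hlast i (hi : ¬H.Adj i.castSucc (Fin.last n)) : s i ⊓ d = ⊥ := by
    refine (Disjoint.mono_right hd (Finset.disjoint_sup_right.2 fun ε hε => ?_)).eq_bot
    have hεi : ε i = false := by
      by_contra h
      exact hi ((Finset.mem_filter.1 hε).2.2 i (by simpa using h))
    exact disjoint_compl_right.mono_right (by simpa [hεi] using cell_le s ε i)
  refine ⟨d, .of_cell_ne_bot (fun a b hab hn => ?_) fun ε hε => ?_⟩
  · induction a using Fin.lastCases with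
    | last => induction b using Fin.lastCases with
      | last => exact absurd rfl hab
      | cast j => simpa [inf_comm] using hlast j (by rwa [H.adj_comm])
    | cast i => induction b using Fin.lastCases with
      | last => simpa using hlast i hn
      | cast j => simpa using hs.inf_eq_bot (a := i) (b := j) (by simpa using hab) hn
  have hrestr : (H.comap Fin.castSuccEmb).IsCliquePattern id (ε ∘ Fin.castSucc) :=
    fun i j hi => by simpa [IsCliquePattern] using hε i.castSucc j.castSucc hi
  rw [cell_snoc]
  cases hl : ε (Fin.last n)
  · by_cases hgood : ToSplit (ε ∘ Fin.castSucc)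
    · simpa using (hsplit _ (by simpa using hgood)).2
    · simpa [← sdiff_eq, (hbad _ hgood).sdiff_eq_left] using hs.cell_ne_bot id _ hrestr
  · have hgood : ToSplit (ε ∘ Fin.castSucc) :=
      ⟨hrestr, fun i hi => (hε i.castSucc (Fin.last n) hi).2 hl (Fin.castSucc_lt_last i).ne⟩
    simpa using (hsplit _ (by simpa using hgood)).1

theorem IsCellRepresentation.of_isEmpty [Nontrivial B] [IsEmpty V] (H : SimpleGraph V)
    (s : V → B) : H.IsCellRepresentation s := by
  refine ⟨fun a => isEmptyElim a, fun k x ε _ => ?_⟩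
  have : IsEmpty (Fin k) := ⟨fun i => isEmptyElim (x i)⟩
  simp [cell, Finset.univ_eq_empty]

theorem isCellRepresentation_of_forall_fin {H : SimpleGraph ℕ} {s : ℕ → B}
    (h : ∀ n, (H.comap (Fin.valEmbedding (n := n))).IsCellRepresentation fun i => s i) :
    H.IsCellRepresentation s := by
  refine ⟨fun a b hab hn => ?_, fun k x ε hx => ?_⟩
  · exact (h (max a b + 1)).inf_eq_bot (a := ⟨a, by omega⟩) (b := ⟨b, by omega⟩)
      (by simpa using hab) hn
  · have hx' i : x i < Finset.univ.sup x + 1 :=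
      Nat.lt_succ_of_le (Finset.le_sup (Finset.mem_univ i))
    exact (h _).cell_ne_bot (fun i => ⟨x i, hx' i⟩) ε <|
      (isCliquePattern_congr (fun _ _ => Fin.ext_iff.symm) (fun _ _ => Iff.rfl) ε).1 hx

theorem exists_isCellRepresentation_nat [Nontrivial B]
    (hatomless : ∀ a : B, ⊥ < a → ∃ b : B, ⊥ < b ∧ b < a) (H : SimpleGraph ℕ) :
    ∃ s : ℕ → B, H.IsCellRepresentation s := by
  obtain ⟨s, hs⟩ := exists_seq_forall_prefix
    (fun n (s : Fin n → B) => (H.comap Fin.valEmbedding).IsCellRepresentation s)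
    (.of_isEmpty _ _) fun n _ hs => hs.exists_snoc hatomless (H := H.comap Fin.valEmbedding)
  exact ⟨s, isCellRepresentation_of_forall_fin hs⟩

theorem exists_isCellRepresentation [Countable V] [Nontrivial B]
    (hatomless : ∀ a : B, ⊥ < a → ∃ b : B, ⊥ < b ∧ b < a) (H : SimpleGraph V) :
    ∃ s : V → B, H.IsCellRepresentation s := by
  obtain ⟨ι, hι⟩ := Countable.exists_injective_nat V
  let ι' : V ↪ ℕ := ⟨ι, hι⟩
  obtain ⟨s, hs⟩ := exists_isCellRepresentation_nat hatomless (H.map ι')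
  exact ⟨s ∘ ι', hs.comp (Embedding.map ι' H)⟩

def IsCellRepresentation.toEmbedding (hs : H.IsCellRepresentation s) :
    H ↪g independenceGraph B :=
  ⟨⟨s, hs.injective⟩, hs.independenceGraph_adj_iff⟩

theorem Embedding.sameQfType_comp {G : SimpleGraph V} (e : G ↪g G) {n : ℕ} (x : Fin n → V) :
    @SameQfType Language.graph V G.structure n x (e ∘ x) :=
  sameQfType_iff.2 ⟨fun _ _ => e.injective.eq_iff.symm, fun _ _ => e.map_adj_iff.symm⟩

end SimpleGraph

theorem randomGraph_semiRetract_of_atomless_BA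
    (B : Type*) [BooleanAlgebra B] [Countable B] [Nontrivial B]
    (hatomless : ∀ a : B, ⊥ < a → ∃ b : B, ⊥ < b ∧ b < a)
    (R : Type*) [Countable R] (G : SimpleGraph R)
    (hext : ∀ U W : Finset R, Disjoint U W → ∃ v : R, v ∉ U ∧ v ∉ W ∧
      (∀ u ∈ U, G.Adj v u) ∧ ∀ w ∈ W, ¬G.Adj v w) :
    ∃ (g : R → B) (f : B → R),
      @IsSemiRetraction FirstOrder.Language.graph LBA R B G.structure (baStructure B) g f := by
  obtain ⟨g, hg⟩ := SimpleGraph.exists_isCellRepresentation hatomless G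
  obtain ⟨f⟩ := SimpleGraph.HasExtensionProperty.exists_embedding hext (independenceGraph B)
  exact ⟨g, f, ⟨hg.injective, fun _ _ _ => hg.sameQfType_comp⟩,
    ⟨f.injective, fun _ _ _ h => f.sameQfType_comp_iff.2 h.independenceGraph⟩,
    fun _ => (f.comp hg.toEmbedding).sameQfType_comp⟩
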